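/- arXiv:1408.5837 — 6 statements merged into one kernel-verified Lean document; each statement's English description precedes it below -/
import Mathlib

section
/- Gauss's formula: for a finite field F with q elements, n times the number of monic irreducible polynomials of degree n in F[t] equals Σ_{d|n} μ(n/d) q^d, where μ is the Möbius function. -/
/-!
Over a field with `q` elements, `X ^ q ^ n - X` has derivative `-1`, so it is squarefree, and an
irreducible monic polynomial divides it exactly when its degree divides `n`. Its factorisation into
monic irreducibles therefore contains each monic irreducible of degree `d ∣ n` exactly once, and
comparing degrees gives `q ^ n = ∑_{d ∣ n} d N_d`. Möbius inversion yields the formula.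
-/

namespace Polynomial

open UniqueFactorizationMonoid

theorem Monic.sum_natDegree_normalizedFactors {K : Type*} [Field K] [DecidableEq K]
    {f : K[X]} (hf : f.Monic) : ((normalizedFactors f).map natDegree).sum = f.natDegree := by
  rw [← natDegree_multiset_prod _ (zero_notMem_normalizedFactors _),
    prod_normalizedFactors_eq hf.ne_zero, hf.normalize_eq_self]

end Polynomial

namespace FiniteField

open Polynomial UniqueFactorizationMonoid Finset

variable {K : Type*} [Field K] [Finite K] {n : ℕ}

theorem separable_X_pow_card_pow_sub_X (hn : n ≠ 0) :
    (X ^ Nat.card K ^ n - X : K[X]).Separable := by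
  have hcard : (Nat.card K : K) = 0 := by
    cases nonempty_fintype K
    rw [Nat.card_eq_fintype_card]
    exact Nat.cast_card_eq_zero K
  exact galois_poly_separable (ringChar K) _ (dvd_pow (ringChar.dvd hcard) hn)

theorem monic_X_pow_card_pow_sub_X (hn : n ≠ 0) : (X ^ Nat.card K ^ n - X : K[X]).Monic :=
  monic_X_pow_sub (by rw [degree_X]; exact_mod_cast Nat.one_lt_pow hn Finite.one_lt_card)

variable [DecidableEq K]

theorem mem_normalizedFactors_X_pow_card_pow_sub_X (hn : n ≠ 0) {f : K[X]} :
    f ∈ normalizedFactors (X ^ Nat.card K ^ n - X) ↔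
      f.Monic ∧ Irreducible f ∧ f.natDegree ∣ n := by
  rw [Polynomial.mem_normalizedFactors_iff (monic_X_pow_card_pow_sub_X hn).ne_zero]
  constructor
  · rintro ⟨hirr, hmon, hdvd⟩
    exact ⟨hmon, hirr, hirr.natDegree_dvd_iff_dvd_X_pow_card_pow_sub_X.mpr hdvd⟩
  · rintro ⟨hmon, hirr, hdvd⟩
    exact ⟨hirr, hmon, hirr.natDegree_dvd_iff_dvd_X_pow_card_pow_sub_X.mp hdvd⟩

theorem nodup_normalizedFactors_X_pow_card_pow_sub_X (hn : n ≠ 0) :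
    (normalizedFactors (X ^ Nat.card K ^ n - X : K[X])).Nodup :=
  (squarefree_iff_nodup_normalizedFactors (monic_X_pow_card_pow_sub_X hn).ne_zero).mp
    (separable_X_pow_card_pow_sub_X hn).squarefree

theorem sum_natDegree_normalizedFactors_X_pow_card_pow_sub_X (hn : n ≠ 0) :
    ∑ f ∈ (normalizedFactors (X ^ Nat.card K ^ n - X : K[X])).toFinset, f.natDegree =
      Nat.card K ^ n := by
  rw [Finset.sum_eq_multiset_sum, Multiset.toFinset_val,
    (nodup_normalizedFactors_X_pow_card_pow_sub_X hn).dedup,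
    (monic_X_pow_card_pow_sub_X hn).sum_natDegree_normalizedFactors,
    X_pow_card_pow_sub_X_natDegree_eq K hn Finite.one_lt_card]

theorem card_monic_irreducible_natDegree_eq {d : ℕ} (hd : d ∣ n) (hn : n ≠ 0) :
    Nat.card {f : K[X] // f.Monic ∧ Irreducible f ∧ f.natDegree = d} =
      #{f ∈ (normalizedFactors (X ^ Nat.card K ^ n - X : K[X])).toFinset | f.natDegree = d} := by
  rw [← Nat.card_eq_finsetCard]
  refine Nat.card_congr (Equiv.subtypeEquivRight fun f => ?_)
  rw [mem_filter, Multiset.mem_toFinset, mem_normalizedFactors_X_pow_card_pow_sub_X hn]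
  constructor
  · rintro ⟨hmon, hirr, rfl⟩
    exact ⟨⟨hmon, hirr, hd⟩, rfl⟩
  · rintro ⟨⟨hmon, hirr, -⟩, hdeg⟩
    exact ⟨hmon, hirr, hdeg⟩

theorem sum_divisors_mul_card_monic_irreducible (hn : n ≠ 0) :
    ∑ d ∈ n.divisors, d * Nat.card {f : K[X] // f.Monic ∧ Irreducible f ∧ f.natDegree = d} =
      Nat.card K ^ n := by
  set S := (normalizedFactors (X ^ Nat.card K ^ n - X : K[X])).toFinset
  have hS : ∀ f ∈ S, f.natDegree ∈ n.divisors := fun f hf => Nat.mem_divisors.mpr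
    ⟨((mem_normalizedFactors_X_pow_card_pow_sub_X hn).mp (Multiset.mem_toFinset.mp hf)).2.2, hn⟩
  rw [← sum_natDegree_normalizedFactors_X_pow_card_pow_sub_X hn,
    ← sum_fiberwise_of_maps_to hS]
  refine sum_congr rfl fun d hd => ?_
  rw [card_monic_irreducible_natDegree_eq (Nat.dvd_of_mem_divisors hd) hn, mul_comm,
    ← smul_eq_mul, ← sum_const]
  exact sum_congr rfl fun f hf => ((mem_filter.mp hf).2).symm

end FiniteField

open ArithmeticFunction in
/-- Gauss's formula: `n` times the number of monic irreducible polynomials of degree `n`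
over a finite field with `q` elements equals `∑_{d ∣ n} μ(n/d) q^d`. -/
theorem gauss_formula (F : Type) [Field F] [Fintype F] (q : ℕ)
    (hq : Fintype.card F = q) (n : ℕ) (hn : 1 ≤ n) :
    (n * Nat.card {f : Polynomial F // f.Monic ∧ Irreducible f ∧ f.natDegree = n} : ℤ) =
      ∑ d ∈ n.divisors, (moebius (n / d) : ℤ) * (q : ℤ) ^ d := by
  classical
  have hcount : ∀ m > 0, ∑ d ∈ m.divisors,
      (d * Nat.card {f : Polynomial F // f.Monic ∧ Irreducible f ∧ f.natDegree = d} : ℤ) =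
        (q : ℤ) ^ m := fun m hm => by
    rw [← hq, Fintype.card_eq_nat_card]
    exact_mod_cast FiniteField.sum_divisors_mul_card_monic_irreducible hm.ne'
  rw [← sum_eq_iff_sum_mul_moebius_eq.mp hcount n hn]
  simp only [Int.cast_id]
  exact Nat.sum_divisorsAntidiagonal' fun a b => moebius a * (q : ℤ) ^ b
end

section
/- Let p be the smallest prime divisor of n ≥ 2 and q ≥ 2 an integer. Then Σ_{d|n} μ(n/d) q^d ≤ q^n, where μ is the Möbius function. -/
/-!
Let `p` be the least prime factor of `n` and split off the two largest divisors: `d = n` contributes `μ(1) q^n = q^n` and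
`d = n / p` contributes `μ(p) q^{n/p} = -q^{n/p}`. Every other divisor is smaller than `n / p`,
and since `|μ| ≤ 1` and `q ≥ 2`, the remaining terms add up to less than `q^{n/p}`.
-/

open Finset

theorem Nat.le_div_minFac_of_dvd_of_lt {n d : ℕ} (hd : d ∣ n) (hdn : d < n) :
    d ≤ n / n.minFac := by
  obtain ⟨k, rfl⟩ := hd
  have hk : 2 ≤ k := by
    by_contra! hk
    interval_cases k <;> simp at hdn
  rw [Nat.le_div_iff_mul_le (Nat.minFac_pos _)]
  exact Nat.mul_le_mul_left d (Nat.minFac_le_of_dvd hk (dvd_mul_left k d))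

theorem Nat.div_minFac_mem_divisors_erase {n : ℕ} (hn : 2 ≤ n) :
    n / n.minFac ∈ n.divisors.erase n := by
  have hp := Nat.minFac_prime (show n ≠ 1 by omega)
  refine mem_erase.2 ⟨(Nat.div_lt_self (by omega) hp.one_lt).ne, ?_⟩
  exact Nat.mem_divisors.2 ⟨Nat.div_dvd_of_dvd n.minFac_dvd, by omega⟩

theorem Int.sum_mul_pow_lt_pow {s : Finset ℕ} {w : ℕ → ℤ} {q m : ℕ} (hq : 2 ≤ q)
    (hw : ∀ k ∈ s, w k ≤ 1) (hs : ∀ k ∈ s, k < m) :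
    ∑ k ∈ s, w k * (q : ℤ) ^ k < (q : ℤ) ^ m := calc
  ∑ k ∈ s, w k * (q : ℤ) ^ k ≤ ∑ k ∈ s, (q : ℤ) ^ k :=
    sum_le_sum fun k hk ↦ mul_le_of_le_one_left (by positivity) (hw k hk)
  _ < (q : ℤ) ^ m := by exact_mod_cast Nat.geomSum_lt hq hs

open ArithmeticFunction in
theorem moebius_sum_le_general (n q : ℕ) (hn : 2 ≤ n) (hq : 2 ≤ q) :
    ∑ d ∈ n.divisors, (moebius (n / d) : ℤ) * (q : ℤ) ^ d ≤ (q : ℤ) ^ n := by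
  set m := n / n.minFac
  have hm := Nat.div_minFac_mem_divisors_erase hn
  have hn_mem : n ∈ n.divisors := Nat.mem_divisors_self n (by omega)
  have hnm : n / m = n.minFac := Nat.div_div_self n.minFac_dvd (by omega)
  have hrest : ∑ d ∈ (n.divisors.erase n).erase m, (moebius (n / d) : ℤ) * (q : ℤ) ^ d
      < (q : ℤ) ^ m := by
    refine Int.sum_mul_pow_lt_pow hq (fun d _ ↦ (le_abs_self _).trans abs_moebius_le_one) ?_
    intro d hd
    obtain ⟨hdm, hdn, hd⟩ := by simpa only [mem_erase] using hd
    exact (Nat.le_div_minFac_of_dvd_of_lt (Nat.dvd_of_mem_divisors hd)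
      (lt_of_le_of_ne (Nat.divisor_le hd) hdn)).lt_of_ne hdm
  rw [← add_sum_erase _ _ hn_mem, ← add_sum_erase _ _ hm, Nat.div_self (by omega), hnm,
    moebius_apply_one, moebius_apply_prime (Nat.minFac_prime (by omega))]
  linarith

open ArithmeticFunction in
/-- For `n ≥ 2` with smallest prime divisor `p`, and an integer `q ≥ 2`,
`∑_{d ∣ n} μ(n/d) q^d ≤ q^n`. -/
theorem moebius_sum_le (n q p : ℕ) (hn : 2 ≤ n) (hq : 2 ≤ q) (hp : p = n.minFac) :
    ∑ d ∈ n.divisors, (moebius (n / d) : ℤ) * (q : ℤ) ^ d ≤ (q : ℤ) ^ n :=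
  moebius_sum_le_general n q hn hq
end

section
/- Let n ≥ 3 be an integer with smallest prime divisor p, and q ≥ 2 an integer. Then Σ_{d|n} μ(n/d) q^d ≥ q^n - q^{1 + n/p} ≥ q^n - q^{n-1}. -/
/-! Only the term `d = n` contributes `q ^ n`; every other divisor satisfies `d ≤ n / p`, since
`n / d` is a divisor of `n` other than `1` and hence at least `p`. As `|μ| ≤ 1`, the remaining terms
are bounded in absolute value by a sum of distinct powers `q ^ d` with `d ≤ n / p`, which is less
than `q ^ (1 + n / p)`. -/

open ArithmeticFunction

namespace Nat

theorem le_div_minFac_of_mem_properDivisors {n d : ℕ} (hd : d ∈ n.properDivisors) :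
    d ≤ n / n.minFac := by
  obtain ⟨hdvd, hlt⟩ := mem_properDivisors.mp hd
  have hn : 0 < n := pos_of_ne_zero (by rintro rfl; simp at hd)
  have hd_eq : n / (n / d) = d := Nat.div_div_self hdvd hn.ne'
  have hcodiv : 2 ≤ n / d := (two_le_iff _).mpr
    ⟨(Nat.div_pos hlt.le (pos_of_dvd_of_pos hdvd hn)).ne',
      fun h => by rw [h, Nat.div_one] at hd_eq; omega⟩
  calc d = n / (n / d) := hd_eq.symm
    _ ≤ n / n.minFac :=
      div_le_div_left (minFac_le_of_dvd hcodiv (div_dvd_of_dvd hdvd)) (minFac_pos n)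

theorem one_add_div_minFac_le_sub_one {n : ℕ} (hn : 3 ≤ n) : 1 + n / n.minFac ≤ n - 1 := by
  have : n / n.minFac ≤ n / 2 := div_le_div_left (minFac_prime (by omega)).two_le two_pos
  omega

end Nat

theorem abs_sum_properDivisors_moebius_mul_pow_lt (n q : ℕ) (hq : 2 ≤ q) :
    |∑ d ∈ n.properDivisors, moebius (n / d) * (q : ℤ) ^ d| < (q : ℤ) ^ (n / n.minFac + 1) := by
  calc |∑ d ∈ n.properDivisors, moebius (n / d) * (q : ℤ) ^ d|
      ≤ ∑ d ∈ n.properDivisors, |moebius (n / d) * (q : ℤ) ^ d| := Finset.abs_sum_le_sum_abs _ _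
    _ ≤ ∑ d ∈ n.properDivisors, (q : ℤ) ^ d := Finset.sum_le_sum fun d _ => by
        rw [abs_mul, abs_of_nonneg (by positivity : (0 : ℤ) ≤ (q : ℤ) ^ d)]
        exact mul_le_of_le_one_left (by positivity) abs_moebius_le_one
    _ < (q : ℤ) ^ (n / n.minFac + 1) := by
        exact_mod_cast Nat.geomSum_lt hq fun d hd =>
          Nat.lt_succ_of_le (Nat.le_div_minFac_of_mem_properDivisors hd)

open ArithmeticFunction in
/-- For `n ≥ 3` with smallest prime divisor `p`, and an integer `q ≥ 2`,
`∑_{d ∣ n} μ(n/d) q^d ≥ q^n - q^{1 + n/p} ≥ q^n - q^{n-1}`. -/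
theorem moebius_sum_ge (n q p : ℕ) (hn : 3 ≤ n) (hq : 2 ≤ q) (hp : p = n.minFac) :
    (q : ℤ) ^ n - (q : ℤ) ^ (1 + n / p) ≤
        ∑ d ∈ n.divisors, (moebius (n / d) : ℤ) * (q : ℤ) ^ d ∧
      (q : ℤ) ^ n - (q : ℤ) ^ (n - 1) ≤ (q : ℤ) ^ n - (q : ℤ) ^ (1 + n / p) := by
  subst hp
  have hrest := abs_sum_properDivisors_moebius_mul_pow_lt n q hq
  rw [add_comm (n / n.minFac)] at hrest
  constructor
  · rw [← Nat.cons_self_properDivisors (by omega), Finset.sum_cons, Nat.div_self (by omega),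
      moebius_apply_one, one_mul]
    linarith [neg_abs_le (∑ d ∈ n.properDivisors, moebius (n / d) * (q : ℤ) ^ d)]
  · have := pow_le_pow_right₀ (by exact_mod_cast (by omega : 1 ≤ q) : (1 : ℤ) ≤ q)
      (Nat.one_add_div_minFac_le_sub_one hn)
    linarith
end

section
/- Let F be a field with q elements and P ∈ F[t] a nonzero polynomial of degree at most n (with n ≥ 1). Then there exists a field quotient L of F[t] (i.e., a quotient of F[t] by a maximal ideal) of cardinality at most 2nq such that the image of P in L is nonzero. -/
/-!
Choose `d` with `n < q ^ d ≤ q * n` and let `K` be the extension of `F` of degree `d`. Since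
`deg P < |K|`, `P` does not vanish at some `a ∈ K`. The kernel of evaluation at `a` is a maximal
ideal of `F[t]` not containing `P`, and its residue field embeds into `K`, so has at most
`q ^ d ≤ q * n` elements.
-/

open Polynomial

theorem Polynomial.exists_isMaximal_natCard_quotient_le_of_natDegree_lt {F K : Type*} [Field F]
    [Field K] [Algebra F K] [Finite K] {P : F[X]} (hP : P ≠ 0) (hdeg : P.natDegree < Nat.card K) :
    ∃ I : Ideal F[X], I.IsMaximal ∧ Finite (F[X] ⧸ I) ∧
      Nat.card (F[X] ⧸ I) ≤ Nat.card K ∧ Ideal.Quotient.mk I P ≠ 0 := by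
  obtain ⟨a, ha⟩ : ∃ a : K, aeval a P ≠ 0 := by
    simp_rw [aeval_def, eval₂_eq_eval_map]
    refine (P.map (algebraMap F K)).exists_eval_ne_zero_of_natDegree_lt_card
      ((Polynomial.map_ne_zero_iff (algebraMap F K).injective).mpr hP) ?_
    rw [natDegree_map, ← Nat.cast_card]
    exact_mod_cast hdeg
  let e := RingHom.quotientKerEquivRange (aeval (R := F) a).toRingHom
  have hfinite : Finite (F[X] ⧸ RingHom.ker (aeval (R := F) a)) := .of_equiv _ e.symm.toEquiv
  refine ⟨_, ?_, hfinite, ?_, ?_⟩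
  · rw [minpoly.ker_aeval_eq_span_minpoly]
    exact PrincipalIdealRing.isMaximal_of_irreducible
      (minpoly.irreducible (IsIntegral.of_finite F a))
  · exact (Nat.card_congr e.toEquiv).trans_le (Finite.card_subtype_le _)
  · rwa [Ne, Ideal.Quotient.eq_zero_iff_mem, RingHom.mem_ker]

theorem Nat.exists_lt_pow_le_mul {q : ℕ} (hq : 2 ≤ q) {n : ℕ} (hn : n ≠ 0) :
    ∃ d, d ≠ 0 ∧ n < q ^ d ∧ q ^ d ≤ q * n :=
  ⟨Nat.log q n + 1, Nat.succ_ne_zero _, Nat.lt_pow_succ_log_self hq n, by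
    rw [pow_succ, mul_comm]
    exact Nat.mul_le_mul_left q (Nat.pow_log_le_self q hn)⟩

/-- Let `F` be a field with `q` elements and `P ∈ F[t]` a nonzero polynomial of degree at most
`n ≥ 1`. Then `P` survives (has nonzero image) in a quotient field of `F[t]` of cardinality
at most `2nq`. -/
theorem survives_in_small_quotient_field (F : Type) [Field F] [Fintype F] (q : ℕ)
    (hq : Fintype.card F = q) (n : ℕ) (hn : 1 ≤ n) (P : Polynomial F) (hP : P ≠ 0)
    (hdeg : P.natDegree ≤ n) :
    ∃ I : Ideal (Polynomial F), I.IsMaximal ∧ Finite (Polynomial F ⧸ I) ∧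
      Nat.card (Polynomial F ⧸ I) ≤ 2 * n * q ∧ Ideal.Quotient.mk I P ≠ 0 := by
  rw [Fintype.card_eq_nat_card] at hq
  obtain ⟨d, hd, hnd, hdn⟩ :=
    Nat.exists_lt_pow_le_mul (hq ▸ Finite.one_lt_card) (Nat.one_le_iff_ne_zero.mp hn)
  obtain ⟨p, _⟩ := CharP.exists F
  have : Fact p.Prime := ⟨CharP.char_is_prime F p⟩
  have : NeZero d := ⟨hd⟩
  have hK : Nat.card (FiniteField.Extension F p d) = q ^ d := by
    rw [FiniteField.natCard_extension, hq]
  obtain ⟨I, hmax, hfin, hcard, hPI⟩ :=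
    exists_isMaximal_natCard_quotient_le_of_natDegree_lt (K := FiniteField.Extension F p d) hP
      (by omega)
  exact ⟨I, hmax, hfin, by nlinarith, hPI⟩
end

section
/- Let F be a field with q elements and suppose every monic irreducible polynomial of degree m - 1 in F[t] divides a nonzero polynomial P of degree at most n, where m ≥ 2. Then q^m ≤ 2nq. -/
/-!
Let `E/F` be the extension of degree `k = m - 1`, so `|E| = q^k`. An element of `E` whose minimal
polynomial has degree `k` is a root of `P`, so there are at most `n` of them. Any other element
has degree a proper divisor `d` of `k` and is fixed by `x ↦ x ^ q ^ d`, which leaves at most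
`∑ q^d ≤ q^k / 2` elements. Hence `q^k ≤ n + q^k / 2`.
-/

open Polynomial IntermediateField Finset Module

theorem two_mul_le_of_mem_properDivisors {d k : ℕ} (h : d ∈ k.properDivisors) : 2 * d ≤ k := by
  obtain ⟨⟨e, rfl⟩, hlt⟩ := Nat.mem_properDivisors.mp h
  have : 2 ≤ e := by
    rcases e with _ | _ | e
    · simp at hlt
    · simp at hlt
    · omega
  nlinarith

theorem two_mul_sum_properDivisors_pow_le {q : ℕ} (hq : 2 ≤ q) (k : ℕ) :
    2 * ∑ d ∈ k.properDivisors, q ^ d ≤ q ^ k := by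
  rcases lt_or_ge k 3 with hk | hk
  · interval_cases k
    · simp
    · simp
    · simpa [show Nat.properDivisors 2 = {1} from rfl, pow_two] using Nat.mul_le_mul_right q hq
  have hsum : ∑ d ∈ k.properDivisors, q ^ d < q ^ (k / 2 + 1) :=
    Nat.geomSum_lt hq fun d hd => by have := two_mul_le_of_mem_properDivisors hd; omega
  calc 2 * ∑ d ∈ k.properDivisors, q ^ d ≤ q * q ^ (k / 2 + 1) := Nat.mul_le_mul hq hsum.le
    _ = q ^ (k / 2 + 2) := by ring
    _ ≤ q ^ k := Nat.pow_le_pow_right (by omega) (by omega)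

theorem card_filter_pow_eq_self_le {K : Type*} [Field K] [Fintype K] [DecidableEq K] {N : ℕ}
    (hN : 1 < N) : #{x : K | x ^ N = x} ≤ N := by
  refine (card_le_degree_of_subset_roots fun x hx => ?_).trans_eq
    (FiniteField.X_pow_card_sub_X_natDegree_eq K hN)
  simp_all [mem_roots (FiniteField.X_pow_card_sub_X_ne_zero K hN)]

section

variable {F E : Type*} [Field F] [Field E] [Algebra F E]

theorem card_le_natDegree_of_minpoly_dvd {P : F[X]} (hP : P ≠ 0) (s : Finset E)
    (hs : ∀ x ∈ s, minpoly F x ∣ P) : #s ≤ P.natDegree := by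
  refine (card_le_degree_of_subset_roots fun x hx => ?_).trans_eq (natDegree_map (algebraMap F E))
  rw [mem_roots (map_ne_zero hP), IsRoot, eval_map, ← aeval_def, ← minpoly.dvd_iff]
  exact hs x hx

variable [Fintype F]

theorem pow_card_pow_natDegree_minpoly {x : E} (hx : IsIntegral F x) :
    x ^ Fintype.card F ^ (minpoly F x).natDegree = x := by
  have := adjoin.finiteDimensional hx
  have : Finite F⟮x⟯ := Module.finite_of_finite F
  have := Fintype.ofFinite F⟮x⟯
  have hcard : Fintype.card F⟮x⟯ = Fintype.card F ^ (minpoly F x).natDegree := by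
    rw [card_eq_pow_finrank (K := F), adjoin.finrank hx]
  have h := FiniteField.pow_card (⟨x, mem_adjoin_simple_self F x⟩ : F⟮x⟯)
  rw [hcard] at h
  exact congrArg Subtype.val h

variable [Fintype E]

theorem card_filter_natDegree_minpoly_ne_finrank_le :
    #{x : E | (minpoly F x).natDegree ≠ finrank F E} ≤
      ∑ d ∈ (finrank F E).properDivisors, Fintype.card F ^ d := by
  classical
  have hsub : ({x : E | (minpoly F x).natDegree ≠ finrank F E} : Finset E) ⊆
      (finrank F E).properDivisors.biUnion fun d => {x : E | x ^ Fintype.card F ^ d = x} := by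
    intro x hx
    have hint : IsIntegral F x := .of_finite F x
    have hdvd := minpoly.degree_dvd hint
    refine mem_biUnion.mpr ⟨_, Nat.mem_properDivisors.mpr ⟨hdvd, ?_⟩, ?_⟩
    · exact (Nat.le_of_dvd finrank_pos hdvd).lt_of_ne (mem_filter.mp hx).2
    · simp [pow_card_pow_natDegree_minpoly hint]
  calc _ ≤ _ := card_le_card hsub
    _ ≤ _ := card_biUnion_le
    _ ≤ _ := sum_le_sum fun d hd => card_filter_pow_eq_self_le <|
        Nat.one_lt_pow (Nat.pos_of_mem_properDivisors hd).ne' Fintype.one_lt_card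

theorem pow_finrank_le_two_mul_natDegree {P : F[X]} (hP : P ≠ 0)
    (hdvd : ∀ π : F[X], π.Monic → Irreducible π → π.natDegree = finrank F E → π ∣ P) :
    Fintype.card F ^ finrank F E ≤ 2 * P.natDegree := by
  classical
  have h_top := card_le_natDegree_of_minpoly_dvd hP {x : E | (minpoly F x).natDegree = finrank F E}
    fun x hx => hdvd _ (minpoly.monic (.of_finite F x)) (minpoly.irreducible (.of_finite F x))
      (mem_filter.mp hx).2
  have h_rest := card_filter_natDegree_minpoly_ne_finrank_le (F := F) (E := E)
  have h_sum := two_mul_sum_properDivisors_pow_le (Fintype.one_lt_card (α := F)) (finrank F E)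
  have h_card := card_filter_add_card_filter_not (s := univ)
    fun x : E => (minpoly F x).natDegree = finrank F E
  simp only [← ne_eq] at h_card
  rw [card_univ, card_eq_pow_finrank (K := F)] at h_card
  omega

end

/-- If every monic irreducible polynomial of degree `m - 1` (with `m ≥ 2`) over a field `F`
with `q` elements divides a nonzero polynomial `P` of degree at most `n`, then `q^m ≤ 2nq`. -/
theorem pow_le_of_all_irreducible_divide (F : Type) [Field F] [Fintype F] (q : ℕ)
    (hq : Fintype.card F = q) (m n : ℕ) (hm : 2 ≤ m) (P : Polynomial F) (hP : P ≠ 0)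
    (hdeg : P.natDegree ≤ n)
    (hdvd : ∀ π : Polynomial F, π.Monic → Irreducible π → π.natDegree = m - 1 → π ∣ P) :
    q ^ m ≤ 2 * n * q := by
  obtain ⟨p, hchar⟩ := CharP.exists F
  have : Fact p.Prime := ⟨CharP.char_is_prime F p⟩
  have : NeZero (m - 1) := ⟨by omega⟩
  let E := FiniteField.Extension F p (m - 1)
  have := Fintype.ofFinite E
  have hk : finrank F E = m - 1 := FiniteField.finrank_extension F p (m - 1)
  have hbound := pow_finrank_le_two_mul_natDegree (E := E) hP (by rwa [hk])
  rw [hk, hq] at hbound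
  calc q ^ m = q ^ (m - 1) * q := by rw [← pow_succ, Nat.sub_add_cancel (by omega)]
    _ ≤ 2 * n * q := by gcongr; omega
end

section
/- Let F be a field with q elements and P a nonzero polynomial in F[t_1, ..., t_k] of degree at most n ≥ 1 with respect to each indeterminate. Then there exists a finite field L that is a quotient of F[t_1, ..., t_k] by a maximal ideal, of cardinality at most (2n)^k · q, such that the image of P in L is nonzero. -/
/-!
Over an extension `L` of `F` with more than `n` elements, a nonzero polynomial of degree at most
`n` in each variable does not vanish on all of `Lᵏ` (combinatorial Nullstellensatz), and the kernel
of evaluation at a point where it survives is a maximal ideal whose quotient embeds in `L`.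
Choosing `|L| = q ^ m` with `m` minimal such that `n < q ^ m` gives `|L| ≤ n q`.
-/

open MvPolynomial

theorem exists_isMaximal_natCard_quotient_le {A L : Type*} [CommRing A] [Field L]
    [Finite L] (f : A →+* L) {x : A} (hx : f x ≠ 0) :
    ∃ I : Ideal A, I.IsMaximal ∧ Finite (A ⧸ I) ∧ Nat.card (A ⧸ I) ≤ Nat.card L ∧
      Ideal.Quotient.mk I x ≠ 0 := by
  let e : (A ⧸ RingHom.ker f) ≃+* f.range := f.quotientKerEquivRange
  have : (RingHom.ker f).IsPrime := RingHom.ker_isPrime f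
  have : Finite (A ⧸ RingHom.ker f) := .of_equiv _ e.symm.toEquiv
  refine ⟨RingHom.ker f, Ideal.Quotient.maximal_of_isField _ (Finite.isField_of_domain _),
    this, ?_, by rwa [Ne, Ideal.Quotient.eq_zero_iff_mem, RingHom.mem_ker]⟩
  calc Nat.card (A ⧸ RingHom.ker f) = Nat.card f.range := Nat.card_congr e.toEquiv
    _ ≤ Nat.card L := Nat.card_le_card_of_injective _ Subtype.val_injective

theorem MvPolynomial.degreeOf_map_of_injective {R S σ : Type*} [CommSemiring R] [CommSemiring S]
    {f : R →+* S} (hf : Function.Injective f) (i : σ) (P : MvPolynomial σ R) :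
    (map f P).degreeOf i = P.degreeOf i := by
  classical
  rw [degreeOf_def, degreeOf_def, degrees_map_of_injective _ hf]

theorem MvPolynomial.exists_aeval_ne_zero_of_degreeOf_lt {F L σ : Type*} [Field F] [Field L]
    [Finite L] [Algebra F L] [Finite σ] {P : MvPolynomial σ F} (hP : P ≠ 0)
    (hdeg : ∀ i, P.degreeOf i < Nat.card L) : ∃ a : σ → L, aeval a P ≠ 0 := by
  have := Fintype.ofFinite L
  by_contra! h
  refine hP (map_injective _ (algebraMap F L).injective ?_)
  refine (eq_zero_of_eval_zero_at_prod_finset _ (fun _ ↦ Finset.univ) (fun i ↦ ?_)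
    (fun a _ ↦ by rw [eval_map, ← aeval_def, h a])).trans (map_zero _).symm
  rw [degreeOf_map_of_injective (algebraMap F L).injective, Finset.card_univ,
    ← Nat.card_eq_fintype_card]
  exact hdeg i

theorem FiniteField.exists_extension_natCard_mem_Ioc (F : Type*) [Field F] [Finite F] {n : ℕ}
    (hn : n ≠ 0) : ∃ (L : Type) (_ : Field L) (_ : Finite L) (_ : Algebra F L),
      Nat.card L ∈ Set.Ioc n (n * Nat.card F) := by
  obtain ⟨p, _⟩ := CharP.exists F
  have := Fintype.ofFinite F
  have : Fact p.Prime := ⟨(FiniteField.card F p).choose_spec.1⟩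
  have hq : 1 < Nat.card F := Finite.one_lt_card
  refine ⟨Extension F p (Nat.log (Nat.card F) n + 1), inferInstance, inferInstance, inferInstance,
    ?_, ?_⟩ <;> rw [natCard_extension]
  · exact Nat.lt_pow_succ_log_self hq n
  · rw [pow_succ]
    exact Nat.mul_le_mul_right _ (Nat.pow_log_le_self _ hn)

/-- Let `F` be a field with `q` elements and `P` a nonzero polynomial in `F[t₁,…,t_k]` of degree
at most `n ≥ 1` in each indeterminate. Then `P` survives in a quotient field of
`F[t₁,…,t_k]` (by a maximal ideal) of cardinality at most `(2n)^k * q`. -/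
theorem mv_survives_in_small_quotient_field (F : Type) [Field F] [Fintype F] (q : ℕ)
    (hq : Fintype.card F = q) (k n : ℕ) (hn : 1 ≤ n) (P : MvPolynomial (Fin k) F)
    (hP : P ≠ 0) (hdeg : ∀ i : Fin k, P.degreeOf i ≤ n) :
    ∃ I : Ideal (MvPolynomial (Fin k) F), I.IsMaximal ∧ Finite (MvPolynomial (Fin k) F ⧸ I) ∧
      Nat.card (MvPolynomial (Fin k) F ⧸ I) ≤ (2 * n) ^ k * q ∧
      Ideal.Quotient.mk I P ≠ 0 := by
  rw [← Nat.card_eq_fintype_card] at hq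
  obtain ⟨L, _, _, _, hdegL, hcardL⟩ : ∃ (L : Type) (_ : Field L) (_ : Finite L) (_ : Algebra F L),
      (∀ i, P.degreeOf i < Nat.card L) ∧ Nat.card L ≤ (2 * n) ^ k * q := by
    rcases k.eq_zero_or_pos with rfl | hk
    · exact ⟨F, inferInstance, inferInstance, inferInstance, finZeroElim,
        by rw [pow_zero, one_mul, hq]⟩
    obtain ⟨L, _, _, _, hnL, hLn⟩ :=
      FiniteField.exists_extension_natCard_mem_Ioc F (n := n) (by omega)
    refine ⟨L, inferInstance, inferInstance, inferInstance,
      fun i ↦ (hdeg i).trans_lt hnL, hLn.trans ?_⟩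
    rw [hq]
    gcongr
    calc n ≤ 2 * n := by omega
      _ ≤ (2 * n) ^ k := Nat.le_self_pow hk.ne' _
  obtain ⟨a, ha⟩ := exists_aeval_ne_zero_of_degreeOf_lt hP hdegL
  obtain ⟨I, hI, hfin, hcard, hPI⟩ :=
    exists_isMaximal_natCard_quotient_le (aeval a).toRingHom (x := P) ha
  exact ⟨I, hI, hfin, hcard.trans hcardL, hPI⟩
end
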